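/- Let E be an elliptic curve over ℚ given by a Weierstrass equation with integer coefficients and let P ∈ E(ℚ) be a non-torsion point. Then for all integers m, n ≥ 1 and every prime p, v_p(den(x(gcd(m,n)•P))) = min( v_p(den(x(m•P))), v_p(den(x(n•P))) ). -/

import Mathlib

/-- The elliptic curve over `ℚ` given by a Weierstrass equation
`y² + a₁xy + a₃y = x³ + a₂x² + a₄x + a₆` with integer coefficients. -/
noncomputable def curveQ (a₁ a₂ a₃ a₄ a₆ : ℤ) : WeierstrassCurve.Affine ℚ :=
  { a₁ := (a₁ : ℚ), a₂ := (a₂ : ℚ), a₃ := (a₃ : ℚ), a₄ := (a₄ : ℚ), a₆ := (a₆ : ℚ) }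

/-- The x-coordinate of a point (with junk value `0` at the point at infinity). -/
noncomputable def xCoord {F : Type} [Field F] {W : WeierstrassCurve.Affine F} :
    W.Point → F
  | .zero => 0
  | @WeierstrassCurve.Affine.Point.some _ _ _ x _ _ => x

/-- The y-coordinate of a point (with junk value `0` at the point at infinity). -/
noncomputable def yCoord {F : Type} [Field F] {W : WeierstrassCurve.Affine F} :
    W.Point → F
  | .zero => 0
  | @WeierstrassCurve.Affine.Point.some _ _ _ _ y _ => y

/-! For a prime `p` and `t ≥ 1`, the point at infinity together with the points `Q` with
`p ^ t ∣ den x(Q)` form a subgroup `G_t` of `E(ℚ)`. The set of `k` with `k • P ∈ G_t` is then a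
subgroup of `ℤ`, so `gcd(m, n) • P ∈ G_t` iff `m • P ∈ G_t` and `n • P ∈ G_t`; for all `t` at once
this is the claimed identity.

That `G_t` is a subgroup holds over any field with a nonarchimedean absolute value and integral
coefficients, with `|x| ≥ r ^ 2` in place of `p ^ t ∣ den x`. A point with `|x| > 1` has
`|x| ^ 3 = |y| ^ 2`, so in the coordinates `z = -x / y`, `w = -1 / y` two points with `|x| ≥ r ^ 2`
have `|z| ≤ r⁻¹` and `|w| ≤ r⁻³`, and the chord or tangent through them has `|dw / dz| ≤ r⁻²`.
Back in `x, y` this says that the line `y = λ x + ν` through them has `|λ| ≤ r⁻² |ν|` and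
`|ν| ≥ r ^ 3`, which forces its third intersection point with the curve to satisfy `|x| ≥ r ^ 2`
as well. -/

open WeierstrassCurve.Affine

section Nonarchimedean

variable {K : Type} [Field K] {v : AbsoluteValue K ℝ}

lemma abv_add_le_of_le (hv : IsNonarchimedean v) {a b : K} {c : ℝ} (ha : v a ≤ c)
    (hb : v b ≤ c) : v (a + b) ≤ c :=
  (hv a b).trans (max_le ha hb)

lemma abv_mul_le_of_le {a b : K} {c d : ℝ} (ha : v a ≤ c) (hb : v b ≤ d) :
    v (a * b) ≤ c * d := by
  rw [map_mul]; exact mul_le_mul ha hb (v.nonneg b) ((v.nonneg a).trans ha)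

lemma abv_mul_le_of_le_one_left {a b : K} {c : ℝ} (ha : v a ≤ 1) (hb : v b ≤ c) :
    v (a * b) ≤ c := by
  rw [map_mul]; exact (mul_le_of_le_one_left (v.nonneg b) ha).trans hb

lemma abv_le_of_mul_eq {a b c d : K} {ε : ℝ} (hb : v b = 1) (hd : v d ≤ ε) (h : a * b = c * d) :
    v a ≤ ε * v c := by
  calc v a = v c * v d := by rw [← map_mul, ← h, map_mul, hb, mul_one]
    _ ≤ ε * v c := by rw [mul_comm]; exact mul_le_mul_of_nonneg_right hd (v.nonneg c)

lemma abv_neg_one_add_eq_one (hv : IsNonarchimedean v) {a : K} (ha : v a < 1) :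
    v (-1 + a) = 1 := by
  rw [hv.add_eq_left_of_lt (by simpa using ha)]; simp

end Nonarchimedean

structure WeierstrassCurve.IsIntegralAt {K : Type} [Field K] (v : AbsoluteValue K ℝ)
    (W : WeierstrassCurve K) : Prop where
  a₁ : v W.a₁ ≤ 1
  a₂ : v W.a₂ ≤ 1
  a₃ : v W.a₃ ≤ 1
  a₄ : v W.a₄ ≤ 1
  a₆ : v W.a₆ ≤ 1

namespace WeierstrassCurve.Affine

variable {K : Type} [Field K] {v : AbsoluteValue K ℝ} {W : WeierstrassCurve.Affine K}

lemma one_lt_abv_x_of_one_lt_abv_y (hv : IsNonarchimedean v) (hW : W.IsIntegralAt v) {x y : K}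
    (h : W.Equation x y) (hy : 1 < v y) : 1 < v x := by
  by_contra! hx
  have hx2 : v (x ^ 2) ≤ 1 := by rw [map_pow]; exact pow_le_one₀ (v.nonneg x) hx
  have hx3 : v (x ^ 3) ≤ 1 := by rw [map_pow]; exact pow_le_one₀ (v.nonneg x) hx
  have hrhs : v (x ^ 3 + W.a₂ * x ^ 2 + W.a₄ * x + W.a₆) ≤ 1 :=
    abv_add_le_of_le hv (abv_add_le_of_le hv (abv_add_le_of_le hv hx3
      (abv_mul_le_of_le_one_left hW.a₂ hx2)) (abv_mul_le_of_le_one_left hW.a₄ hx)) hW.a₆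
  have hrest : v (W.a₁ * x * y + W.a₃ * y) ≤ v y := by
    rw [mul_assoc]
    exact abv_add_le_of_le hv (abv_mul_le_of_le_one_left hW.a₁
      (abv_mul_le_of_le_one_left hx le_rfl)) (abv_mul_le_of_le_one_left hW.a₃ le_rfl)
  have hlhs : v (y ^ 2 + (W.a₁ * x * y + W.a₃ * y)) = v y ^ 2 := by
    rw [hv.add_eq_left_of_lt (by rw [map_pow]; nlinarith), map_pow]
  rw [← add_assoc, (equation_iff x y).mp h] at hlhs
  nlinarith

lemma abv_x_pow_three_eq_abv_y_sq (hv : IsNonarchimedean v) (hW : W.IsIntegralAt v) {x y : K}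
    (h : W.Equation x y) (hx : 1 < v x) : v x ^ 3 = v y ^ 2 := by
  have h' : y ^ 2 + (W.a₁ * x * y + W.a₃ * y) = x ^ 3 + (W.a₂ * x ^ 2 + W.a₄ * x + W.a₆) := by
    linear_combination (equation_iff x y).mp h
  have hx23 : v x ^ 2 < v x ^ 3 := pow_lt_pow_right₀ hx (by norm_num)
  have hrest : v (W.a₂ * x ^ 2 + W.a₄ * x + W.a₆) ≤ v x ^ 2 :=
    abv_add_le_of_le hv (abv_add_le_of_le hv (abv_mul_le_of_le_one_left hW.a₂ (by simp))
      (abv_mul_le_of_le_one_left hW.a₄ (by nlinarith))) (hW.a₆.trans (by nlinarith))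
  have hrhs : v (x ^ 3 + (W.a₂ * x ^ 2 + W.a₄ * x + W.a₆)) = v x ^ 3 := by
    rw [hv.add_eq_left_of_lt (by rw [map_pow]; linarith), map_pow]
  have hxy : v x < v y := by
    by_contra! hyx
    have hlhs : v (y ^ 2 + (W.a₁ * x * y + W.a₃ * y)) ≤ v x ^ 2 := by
      refine abv_add_le_of_le hv ?_ (abv_add_le_of_le hv ?_ ?_)
      · simpa using pow_le_pow_left₀ (v.nonneg y) hyx 2
      · rw [mul_assoc, sq]
        exact abv_mul_le_of_le_one_left hW.a₁ (abv_mul_le_of_le le_rfl hyx)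
      · exact abv_mul_le_of_le_one_left hW.a₃ (by nlinarith)
    rw [h', hrhs] at hlhs
    linarith
  have hrest' : v (W.a₁ * x * y + W.a₃ * y) ≤ v x * v y := by
    rw [mul_assoc]
    exact abv_add_le_of_le hv (abv_mul_le_of_le_one_left hW.a₁ (map_mul v x y).le)
      (abv_mul_le_of_le_one_left hW.a₃ (by nlinarith [v.nonneg y]))
  have hlhs : v (y ^ 2 + (W.a₁ * x * y + W.a₃ * y)) = v y ^ 2 := by
    rw [hv.add_eq_left_of_lt (by rw [map_pow]; nlinarith), map_pow]
  rw [← hrhs, ← hlhs, h']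

variable (W) in
/-- The Weierstrass equation in the coordinates `z = -x / y`, `w = -1 / y` centred at the point at
infinity (Silverman, IV.1). -/
def EquationZW (z w : K) : Prop :=
  w = z ^ 3 + W.a₁ * z * w + W.a₂ * z ^ 2 * w + W.a₃ * w ^ 2 + W.a₄ * z * w ^ 2 + W.a₆ * w ^ 3

lemma equationZW_of_equation {x y : K} (h : W.Equation x y) (hy : y ≠ 0) :
    W.EquationZW (-x / y) (-1 / y) := by
  rw [EquationZW]
  field_simp
  linear_combination (-1) * (equation_iff x y).mp h

lemma exists_chord_relation (hv : IsNonarchimedean v) (hW : W.IsIntegralAt v) {ε : ℝ}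
    (hε : ε < 1) {z₁ w₁ z₂ w₂ : K} (h₁ : W.EquationZW z₁ w₁) (h₂ : W.EquationZW z₂ w₂)
    (hz₁ : v z₁ ≤ ε) (hw₁ : v w₁ ≤ ε ^ 3) (hz₂ : v z₂ ≤ ε) (hw₂ : v w₂ ≤ ε ^ 3) :
    ∃ A B : K, v A ≤ ε ^ 2 ∧ v B = 1 ∧ A * (z₂ - z₁) + B * (w₂ - w₁) = 0 := by
  have hε0 : 0 ≤ ε := (v.nonneg z₁).trans hz₁
  have hε2 : ε ^ 2 ≤ ε := pow_le_of_le_one hε0 hε.le (by norm_num)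
  have hε3 : ε ^ 3 ≤ ε ^ 2 := pow_le_pow_of_le_one hε0 hε.le (by norm_num)
  have hw₁' := hw₁.trans hε3
  have hw₂' := hw₂.trans hε3
  have hz₁1 := hz₁.trans hε.le
  have hz₂1 := hz₂.trans hε.le
  have hw₁1 := hw₁'.trans (hε2.trans hε.le)
  have hw₂1 := hw₂'.trans (hε2.trans hε.le)
  have hww : v (w₁ + w₂) ≤ ε ^ 2 := abv_add_le_of_le hv hw₁' hw₂'
  have hzz : ∀ {a b : K}, v a ≤ ε → v b ≤ ε → v (a * b) ≤ ε ^ 2 := fun ha hb ↦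
    (abv_mul_le_of_le ha hb).trans_eq (sq ε).symm
  refine ⟨z₁ ^ 2 + z₁ * z₂ + z₂ ^ 2 + W.a₁ * w₂ + W.a₂ * ((z₁ + z₂) * w₂) + W.a₄ * (w₂ * w₂),
    -1 + (W.a₁ * z₁ + W.a₂ * (z₁ * z₁) + W.a₃ * (w₁ + w₂) + W.a₄ * (z₁ * (w₁ + w₂)) +
      W.a₆ * (w₁ * w₁ + w₁ * w₂ + w₂ * w₂)), ?_, ?_, ?_⟩
  · refine abv_add_le_of_le hv (abv_add_le_of_le hv (abv_add_le_of_le hv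
      (abv_add_le_of_le hv (abv_add_le_of_le hv ?_ (hzz hz₁ hz₂)) ?_) ?_) ?_) ?_
    · exact sq z₁ ▸ hzz hz₁ hz₁
    · exact sq z₂ ▸ hzz hz₂ hz₂
    · exact abv_mul_le_of_le_one_left hW.a₁ hw₂'
    · exact abv_mul_le_of_le_one_left hW.a₂
        (abv_mul_le_of_le_one_left (abv_add_le_of_le hv hz₁1 hz₂1) hw₂')
    · exact abv_mul_le_of_le_one_left hW.a₄ (abv_mul_le_of_le_one_left hw₂1 hw₂')
  · refine abv_neg_one_add_eq_one hv (lt_of_le_of_lt (b := ε) ?_ hε)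
    refine abv_add_le_of_le hv (abv_add_le_of_le hv (abv_add_le_of_le hv
      (abv_add_le_of_le hv ?_ ?_) ?_) ?_) ?_
    · exact abv_mul_le_of_le_one_left hW.a₁ hz₁
    · exact abv_mul_le_of_le_one_left hW.a₂ (abv_mul_le_of_le_one_left hz₁1 hz₁)
    · exact abv_mul_le_of_le_one_left hW.a₃ (hww.trans hε2)
    · exact abv_mul_le_of_le_one_left hW.a₄ (abv_mul_le_of_le_one_left hz₁1 (hww.trans hε2))
    · refine abv_mul_le_of_le_one_left hW.a₆ (abv_add_le_of_le hv (abv_add_le_of_le hv ?_ ?_) ?_)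
      · exact abv_mul_le_of_le_one_left hw₁1 (hw₁'.trans hε2)
      · exact abv_mul_le_of_le_one_left hw₁1 (hw₂'.trans hε2)
      · exact abv_mul_le_of_le_one_left hw₂1 (hw₂'.trans hε2)
  · rw [EquationZW] at h₁ h₂
    linear_combination h₁ - h₂

lemma abv_chord_slope_le (hv : IsNonarchimedean v) (hW : W.IsIntegralAt v) {ε : ℝ} (hε : ε < 1)
    {z₁ w₁ z₂ w₂ L ν : K} (h₁ : W.EquationZW z₁ w₁) (h₂ : W.EquationZW z₂ w₂)
    (hz₁ : v z₁ ≤ ε) (hw₁ : v w₁ ≤ ε ^ 3) (hz₂ : v z₂ ≤ ε) (hw₂ : v w₂ ≤ ε ^ 3)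
    (hne : z₁ = z₂ → w₁ ≠ w₂) (hl₁ : L * z₁ + ν * w₁ = -1) (hl₂ : L * z₂ + ν * w₂ = -1) :
    v L ≤ ε ^ 2 * v ν := by
  obtain ⟨A, B, hA, hB, hAB⟩ := exists_chord_relation hv hW hε h₁ h₂ hz₁ hw₁ hz₂ hw₂
  have hB0 : B ≠ 0 := by rintro rfl; simp at hB
  have hz : z₂ - z₁ ≠ 0 := by
    intro h0
    rw [h0, mul_zero, zero_add, mul_eq_zero, sub_eq_zero] at hAB
    exact hne (sub_eq_zero.mp h0).symm (hAB.resolve_left hB0).symm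
  refine abv_le_of_mul_eq hB hA (mul_right_cancel₀ hz ?_)
  linear_combination B * (hl₂ - hl₁) - ν * hAB

lemma abv_tangent_slope_le (hv : IsNonarchimedean v) (hW : W.IsIntegralAt v) {ε : ℝ} (hε : ε < 1)
    {x y L : K} (h : W.Equation x y) (hy : y ≠ 0) (hz : v (-x / y) ≤ ε) (hw : v (-1 / y) ≤ ε ^ 3)
    (hL : L * (2 * y + W.a₁ * x + W.a₃) = 3 * x ^ 2 + 2 * W.a₂ * x + W.a₄ - W.a₁ * y) :
    v L ≤ ε ^ 2 * v (y - L * x) := by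
  have hLE : L * (-1 + (W.a₁ * (-x / y) + W.a₂ * (-x / y * (-x / y)) + 2 * (W.a₃ * (-1 / y)) +
      2 * (W.a₄ * (-x / y * (-1 / y))) + 3 * (W.a₆ * (-1 / y * (-1 / y))))) =
      (y - L * x) * (3 * (-x / y * (-x / y)) + W.a₁ * (-1 / y) + 2 * (W.a₂ * (-x / y * (-1 / y))) +
      W.a₄ * (-1 / y * (-1 / y))) := by
    field_simp
    linear_combination (-3 * L) * (equation_iff x y).mp h + y * hL
  generalize -x / y = z at hz hLE
  generalize -1 / y = w at hw hLE
  have hε0 : 0 ≤ ε := (v.nonneg z).trans hz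
  have hε2 : ε ^ 2 ≤ ε := pow_le_of_le_one hε0 hε.le (by norm_num)
  have hε3 : ε ^ 3 ≤ ε ^ 2 := pow_le_pow_of_le_one hε0 hε.le (by norm_num)
  have hw' := hw.trans hε3
  have hz1 := hz.trans hε.le
  have hw1 := hw'.trans (hε2.trans hε.le)
  have h2 : v (2 : K) ≤ 1 := by simpa using hv.apply_natCast_le_one (n := 2)
  have h3 : v (3 : K) ≤ 1 := by simpa using hv.apply_natCast_le_one (n := 3)
  have hEz : v (3 * (z * z) + W.a₁ * w + 2 * (W.a₂ * (z * w)) + W.a₄ * (w * w)) ≤ ε ^ 2 := by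
    refine abv_add_le_of_le hv (abv_add_le_of_le hv (abv_add_le_of_le hv ?_ ?_) ?_) ?_
    · exact abv_mul_le_of_le_one_left h3 ((abv_mul_le_of_le hz hz).trans_eq (sq ε).symm)
    · exact abv_mul_le_of_le_one_left hW.a₁ hw'
    · exact abv_mul_le_of_le_one_left h2
        (abv_mul_le_of_le_one_left hW.a₂ (abv_mul_le_of_le_one_left hz1 hw'))
    · exact abv_mul_le_of_le_one_left hW.a₄ (abv_mul_le_of_le_one_left hw1 hw')
  have hEw : v (-1 + (W.a₁ * z + W.a₂ * (z * z) + 2 * (W.a₃ * w) + 2 * (W.a₄ * (z * w)) +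
      3 * (W.a₆ * (w * w)))) = 1 := by
    refine abv_neg_one_add_eq_one hv (lt_of_le_of_lt (b := ε) ?_ hε)
    refine abv_add_le_of_le hv (abv_add_le_of_le hv (abv_add_le_of_le hv
      (abv_add_le_of_le hv ?_ ?_) ?_) ?_) ?_
    · exact abv_mul_le_of_le_one_left hW.a₁ hz
    · exact abv_mul_le_of_le_one_left hW.a₂ (abv_mul_le_of_le_one_left hz1 hz)
    · exact abv_mul_le_of_le_one_left h2 (abv_mul_le_of_le_one_left hW.a₃ (hw'.trans hε2))
    · exact abv_mul_le_of_le_one_left h2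
        (abv_mul_le_of_le_one_left hW.a₄ (abv_mul_le_of_le_one_left hz1 (hw'.trans hε2)))
    · exact abv_mul_le_of_le_one_left h3
        (abv_mul_le_of_le_one_left hW.a₆ (abv_mul_le_of_le_one_left hw1 (hw'.trans hε2)))
  exact abv_le_of_mul_eq hEw hEz hLE

lemma abv_zw_le (hv : IsNonarchimedean v) (hW : W.IsIntegralAt v) {r : ℝ} (hr : 1 < r) {x y : K}
    (h : W.Equation x y) (hx : r ^ 2 ≤ v x) :
    y ≠ 0 ∧ v (-x / y) ≤ r⁻¹ ∧ v (-1 / y) ≤ r⁻¹ ^ 3 := by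
  have hr0 : 0 < r := zero_lt_one.trans hr
  have hxy := abv_x_pow_three_eq_abv_y_sq hv hW h (by nlinarith)
  have hy : r ^ 3 ≤ v y := by
    rw [← pow_le_pow_iff_left₀ (by positivity) (v.nonneg y) two_ne_zero, ← hxy]
    calc (r ^ 3) ^ 2 = (r ^ 2) ^ 3 := by ring
      _ ≤ v x ^ 3 := pow_le_pow_left₀ (by positivity) hx 3
  have hy0 : 0 < v y := lt_of_lt_of_le (by positivity) hy
  have hrxy : r * v x ≤ v y := by
    rw [← pow_le_pow_iff_left₀ (by positivity) (v.nonneg y) two_ne_zero, ← hxy]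
    nlinarith [mul_le_mul_of_nonneg_right hx (sq_nonneg (v x))]
  refine ⟨v.pos_iff.mp hy0, ?_, ?_⟩
  · rw [map_div₀, v.map_neg, div_le_iff₀ hy0, inv_mul_eq_div, le_div_iff₀ hr0]
    linarith
  · rw [map_div₀, v.map_neg, map_one, one_div, inv_pow]
    exact inv_anti₀ (by positivity) hy

lemma le_abv_of_equation_line (hv : IsNonarchimedean v) (hW : W.IsIntegralAt v) {r : ℝ}
    (hr : 1 < r) {L ν X : K} (hL : v L ≤ r⁻¹ ^ 2 * v ν) (hν : r ^ 3 ≤ v ν)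
    (h : W.Equation X (L * X + ν)) : r ^ 2 ≤ v X := by
  by_contra! hX
  have hν0 : 0 < v ν := lt_of_lt_of_le (by positivity) hν
  have hrX : r⁻¹ ^ 2 * v X < 1 := by
    rw [inv_pow, inv_mul_lt_iff₀ (by positivity), mul_one]; exact hX
  have hLX : v (L * X) < v ν := by
    calc v (L * X) ≤ r⁻¹ ^ 2 * v ν * v X := by
          rw [map_mul]; exact mul_le_mul_of_nonneg_right hL (v.nonneg X)
      _ = (r⁻¹ ^ 2 * v X) * v ν := by ring
      _ < v ν := mul_lt_of_lt_one_left hν0 hrX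
  have hY : v (L * X + ν) = v ν := hv.add_eq_right_of_lt hLX
  have hX1 := one_lt_abv_x_of_one_lt_abv_y hv hW h
    (by rw [hY]; exact lt_of_lt_of_le (one_lt_pow₀ hr three_ne_zero) hν)
  have hX3 := abv_x_pow_three_eq_abv_y_sq hv hW h hX1
  rw [hY] at hX3
  refine hX.not_ge ((pow_le_pow_iff_left₀ (by positivity) (v.nonneg X) three_ne_zero).mp ?_)
  calc (r ^ 2) ^ 3 = (r ^ 3) ^ 2 := by ring
    _ ≤ v ν ^ 2 := pow_le_pow_left₀ (by positivity) hν 2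
    _ = v X ^ 3 := hX3.symm

section Addition

variable [DecidableEq K]

lemma abv_slope_le (hv : IsNonarchimedean v) (hW : W.IsIntegralAt v) {r : ℝ} (hr : 1 < r)
    {x₁ y₁ x₂ y₂ : K} (h₁ : W.Equation x₁ y₁) (h₂ : W.Equation x₂ y₂)
    (hxy : ¬(x₁ = x₂ ∧ y₁ = W.negY x₂ y₂)) (hx₁ : r ^ 2 ≤ v x₁) (hx₂ : r ^ 2 ≤ v x₂) :
    v (W.slope x₁ x₂ y₁ y₂) ≤ r⁻¹ ^ 2 * v (y₁ - W.slope x₁ x₂ y₁ y₂ * x₁) := by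
  have hr' : r⁻¹ < 1 := inv_lt_one_of_one_lt₀ hr
  obtain ⟨hy₁, hz₁, hw₁⟩ := abv_zw_le hv hW hr h₁ hx₁
  obtain ⟨hy₂, hz₂, hw₂⟩ := abv_zw_le hv hW hr h₂ hx₂
  by_cases hx : x₁ = x₂
  · have hy : y₁ ≠ W.negY x₂ y₂ := fun hy ↦ hxy ⟨hx, hy⟩
    subst hx
    obtain rfl := Y_eq_of_Y_ne h₁ h₂ rfl hy
    refine abv_tangent_slope_le hv hW hr' h₁ hy₁ hz₁ hw₁ ?_
    have hM : y₁ - W.negY x₁ y₁ = 2 * y₁ + W.a₁ * x₁ + W.a₃ := by rw [negY]; ring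
    rw [slope_of_Y_ne rfl hy, ← hM]
    exact div_mul_cancel₀ _ (sub_ne_zero.mpr hy)
  · rw [slope_of_X_ne hx]
    have hx' : x₁ - x₂ ≠ 0 := sub_ne_zero.mpr hx
    refine abv_chord_slope_le hv hW hr' (equationZW_of_equation h₁ hy₁)
      (equationZW_of_equation h₂ hy₂) hz₁ hw₁ hz₂ hw₂ ?_ ?_ ?_
    · intro hz hw
      have hy : y₁ = y₂ := by simpa [div_eq_mul_inv, hy₁, hy₂] using hw
      subst hy
      exact hx (by simpa [div_eq_mul_inv, hy₁] using hz)
    · field_simp; ring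
    · field_simp; ring

lemma le_abv_intercept (hv : IsNonarchimedean v) (hW : W.IsIntegralAt v) {r : ℝ} (hr : 1 < r)
    {x₁ y₁ x₂ y₂ : K} (h₁ : W.Equation x₁ y₁) (h₂ : W.Equation x₂ y₂)
    (hxy : ¬(x₁ = x₂ ∧ y₁ = W.negY x₂ y₂)) (hx₁ : r ^ 2 ≤ v x₁) (hx₂ : r ^ 2 ≤ v x₂) :
    r ^ 3 ≤ v (y₁ - W.slope x₁ x₂ y₁ y₂ * x₁) := by
  have hL := abv_slope_le hv hW hr h₁ h₂ hxy hx₁ hx₂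
  set L := W.slope x₁ x₂ y₁ y₂
  obtain ⟨hy₁, hz₁, hw₁⟩ := abv_zw_le hv hW hr h₁ hx₁
  have hline : L * (-x₁ / y₁) + (y₁ - L * x₁) * (-1 / y₁) = -1 := by field_simp; ring
  have h1 : 1 ≤ r⁻¹ ^ 3 * v (y₁ - L * x₁) := by
    calc 1 = v (L * (-x₁ / y₁) + (y₁ - L * x₁) * (-1 / y₁)) := by rw [hline]; simp
      _ ≤ r⁻¹ ^ 3 * v (y₁ - L * x₁) := by
        refine abv_add_le_of_le hv ((abv_mul_le_of_le hL hz₁).trans_eq (by ring))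
          ((abv_mul_le_of_le le_rfl hw₁).trans_eq (by ring))
  rwa [inv_pow, inv_mul_eq_div, one_le_div (by positivity)] at h1

lemma le_abv_addX (hv : IsNonarchimedean v) (hW : W.IsIntegralAt v) {r : ℝ} (hr : 1 < r)
    {x₁ y₁ x₂ y₂ : K} (h₁ : W.Equation x₁ y₁) (h₂ : W.Equation x₂ y₂)
    (hxy : ¬(x₁ = x₂ ∧ y₁ = W.negY x₂ y₂)) (hx₁ : r ^ 2 ≤ v x₁) (hx₂ : r ^ 2 ≤ v x₂) :
    r ^ 2 ≤ v (W.addX x₁ x₂ (W.slope x₁ x₂ y₁ y₂)) := by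
  have h := equation_negAdd h₁ h₂ hxy
  rw [negAddY, show ∀ L X : K, L * (X - x₁) + y₁ = L * X + (y₁ - L * x₁) by intros; ring] at h
  exact le_abv_of_equation_line hv hW hr (abv_slope_le hv hW hr h₁ h₂ hxy hx₁ hx₂)
    (le_abv_intercept hv hW hr h₁ h₂ hxy hx₁ hx₂) h

variable (W) in
/-- For a discrete valuation with uniformiser `π` and `r = |π|⁻ⁿ` this is the subgroup `E_n` of
Silverman, VII.2. -/
def filtration (hv : IsNonarchimedean v) (hW : W.IsIntegralAt v)
    (r : ℝ) (hr : 1 < r) : AddSubgroup W.Point where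
  carrier := {Q | Q = 0 ∨ r ^ 2 ≤ v (xCoord Q)}
  zero_mem' := Or.inl rfl
  neg_mem' := by
    rintro (_ | _) hQ
    · exact hQ
    · rw [Point.neg_some]
      exact Or.inr (hQ.resolve_left (Point.some_ne_zero _))
  add_mem' := by
    rintro (_ | @⟨x₁, y₁, h₁⟩) (_ | @⟨x₂, y₂, h₂⟩) hP hQ
    · exact hQ
    · exact hQ
    · exact hP
    by_cases hxy : x₁ = x₂ ∧ y₁ = W.negY x₂ y₂
    · exact Or.inl (Point.add_of_Y_eq hxy.1 hxy.2)
    · rw [Set.mem_ofPred_eq, Point.add_some hxy]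
      exact Or.inr (le_abv_addX hv hW hr h₁.1 h₂.1 hxy (hP.resolve_left (Point.some_ne_zero h₁))
        (hQ.resolve_left (Point.some_ne_zero h₂)))

lemma mem_filtration {hv : IsNonarchimedean v} {hW : W.IsIntegralAt v} {r : ℝ}
    {hr : 1 < r} {Q : W.Point} : Q ∈ W.filtration hv hW r hr ↔ Q = 0 ∨ r ^ 2 ≤ v (xCoord Q) :=
  Iff.rfl

end Addition

end WeierstrassCurve.Affine

open Rat.AbsoluteValue

lemma Rat.AbsoluteValue.isNonarchimedean_padic (p : ℕ) [Fact p.Prime] :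
    IsNonarchimedean (padic p) := fun a b ↦ by
  simpa using (Rat.cast_le (K := ℝ)).mpr (padicNorm.nonarchimedean (p := p) (q := a) (r := b))

lemma padicNorm_eq_padicNorm_num_mul (p : ℕ) [Fact p.Prime] (q : ℚ) :
    padicNorm p q = padicNorm p q.num * p ^ q.den.factorization p := by
  conv_lhs => rw [← q.num_div_den, padicNorm.div]
  rw [padicNorm.eq_zpow_of_nonzero (q := q.den) (by positivity), padicValRat.of_nat,
    Nat.factorization_def _ Fact.out, zpow_neg, zpow_natCast, div_inv_eq_mul]

lemma pow_le_padic_iff (p : ℕ) [Fact p.Prime] {t : ℕ} (ht : 1 ≤ t) (q : ℚ) :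
    (p : ℝ) ^ t ≤ padic p q ↔ t ≤ q.den.factorization p := by
  have hp : p.Prime := Fact.out
  have hp1 : (1 : ℝ) < p := by exact_mod_cast hp.one_lt
  rw [padic_eq_padicNorm, padicNorm_eq_padicNorm_num_mul]
  rcases Nat.eq_zero_or_pos (q.den.factorization p) with h0 | hpos
  · rw [h0, pow_zero, mul_one]
    refine iff_of_false (fun h ↦ ?_) (by omega)
    have : (padicNorm p q.num : ℝ) ≤ 1 := by exact_mod_cast padicNorm.of_int q.num
    linarith [one_lt_pow₀ hp1 (by omega : t ≠ 0)]
  · have hden : p ∣ q.den := Nat.dvd_of_factorization_pos hpos.ne'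
    have hnum : ¬ (p : ℤ) ∣ q.num := fun hnum ↦ hp.ne_one
      (Nat.eq_one_of_dvd_coprimes q.reduced (Int.ofNat_dvd_left.mp hnum) hden)
    rw [(padicNorm.int_eq_one_iff q.num).mpr hnum, one_mul]
    push_cast
    exact pow_le_pow_iff_right₀ hp1

lemma AddSubgroup.gcd_nsmul_mem_iff {G : Type*} [AddGroup G] (H : AddSubgroup G) (P : G)
    (m n : ℕ) : m.gcd n • P ∈ H ↔ m • P ∈ H ∧ n • P ∈ H := by
  constructor
  · intro h
    obtain ⟨a, ha⟩ := Nat.gcd_dvd_left m n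
    obtain ⟨b, hb⟩ := Nat.gcd_dvd_right m n
    constructor
    · rw [ha, mul_nsmul]; exact H.nsmul_mem h a
    · rw [hb, mul_nsmul]; exact H.nsmul_mem h b
  · rintro ⟨hm, hn⟩
    rw [← natCast_zsmul, Nat.gcd_eq_gcd_ab, add_zsmul, mul_comm, mul_zsmul, mul_comm, mul_zsmul,
      natCast_zsmul, natCast_zsmul]
    exact H.add_mem (H.zsmul_mem hm _) (H.zsmul_mem hn _)

lemma Nat.eq_min_of_forall_one_le {a b c : ℕ} (h : ∀ t, 1 ≤ t → (t ≤ a ↔ t ≤ b ∧ t ≤ c)) :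
    a = min b c :=
  eq_of_forall_le_iff fun t ↦ by
    rcases Nat.eq_zero_or_pos t with rfl | ht
    · simp
    · rw [le_min_iff]; exact h t ht

lemma curveQ_isIntegralAt (a₁ a₂ a₃ a₄ a₆ : ℤ) (p : ℕ) [Fact p.Prime] :
    (curveQ a₁ a₂ a₃ a₄ a₆).IsIntegralAt (padic p) :=
  ⟨padic_le_one p a₁, padic_le_one p a₂, padic_le_one p a₃, padic_le_one p a₄, padic_le_one p a₆⟩

lemma mem_filtration_curveQ_iff {a₁ a₂ a₃ a₄ a₆ : ℤ} {p : ℕ} [Fact p.Prime]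
    {Q : (curveQ a₁ a₂ a₃ a₄ a₆).Point} (hQ : Q ≠ 0) {t : ℕ} (hr : 1 < √(p : ℝ) ^ t) :
    Q ∈ (curveQ a₁ a₂ a₃ a₄ a₆).filtration (isNonarchimedean_padic p)
      (curveQ_isIntegralAt a₁ a₂ a₃ a₄ a₆ p) (√(p : ℝ) ^ t) hr ↔
      t ≤ (xCoord Q).den.factorization p := by
  have ht : 1 ≤ t := Nat.one_le_iff_ne_zero.mpr (by rintro rfl; simp at hr)
  rw [mem_filtration, or_iff_right hQ, ← pow_mul, mul_comm, pow_mul,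
    Real.sq_sqrt (Nat.cast_nonneg p)]
  exact pow_le_padic_iff p ht _

/-- Let `P` be a non-torsion rational point on an elliptic curve over `ℚ` with integer
coefficients.  For all integers `m, n ≥ 1` and every prime `p`,
`v_p(den(x(gcd(m,n)•P))) = min(v_p(den(x(m•P))), v_p(den(x(n•P))))`. -/
theorem valuation_den_gcd_smul (a₁ a₂ a₃ a₄ a₆ : ℤ)
    (P : (curveQ a₁ a₂ a₃ a₄ a₆).Point)
    (hP : ∀ n : ℕ, 1 ≤ n → n • P ≠ 0)
    (m n : ℕ) (hm : 1 ≤ m) (hn : 1 ≤ n) (p : ℕ) (hp : p.Prime) :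
    (xCoord (Nat.gcd m n • P)).den.factorization p =
      min ((xCoord (m • P)).den.factorization p)
        ((xCoord (n • P)).den.factorization p) := by
  have : Fact p.Prime := ⟨hp⟩
  have hg : 1 ≤ m.gcd n := Nat.gcd_pos_of_pos_left n hm
  refine Nat.eq_min_of_forall_one_le fun t ht ↦ ?_
  have hr : 1 < √(p : ℝ) ^ t :=
    one_lt_pow₀ (Real.lt_sqrt zero_le_one |>.mpr (by exact_mod_cast hp.one_lt)) (by omega)
  rw [← mem_filtration_curveQ_iff (hP _ hg) hr, ← mem_filtration_curveQ_iff (hP m hm) hr,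
    ← mem_filtration_curveQ_iff (hP n hn) hr]
  exact AddSubgroup.gcd_nsmul_mem_iff _ P m n
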